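/- arXiv:2504.14339 — 11 statements merged into one kernel-verified Lean document; each statement's English description precedes it below -/
import Mathlib

section
/- Let p be a prime, v ≥ 1, and let g be an element of the holomorph of ℤ/p^vℤ (i.e., g(x) = αx + β with α a unit of ℤ/p^vℤ) such that g^p = id and g has no fixed points, and p is odd. Then α = 1 and β = i·p^{v-1} for some i with 0 < i < p; that is, g(x) = x + i·p^{v-1} for all x. -/
section Aux

variable {R : Type*} [CommRing R]

/-- Binomial expansion to second order. -/
lemma aux_pow_one_add (h : R) (i : ℕ) :
    ∃ c : R, (1 + h) ^ i = 1 + (i : R) * h + h ^ 2 * c := by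
  induction i with
  | zero => exact ⟨0, by simp⟩
  | succ n ih =>
    obtain ⟨c, hc⟩ := ih
    refine ⟨c + (n : R) + h * c, ?_⟩
    rw [pow_succ, hc]
    push_cast
    ring

/-- Geometric sum of `1 + h` to second order. -/
lemma aux_geom_sum (h : R) (n : ℕ) :
    ∃ c : R, (∑ i ∈ Finset.range n, (1 + h) ^ i) =
      (n : R) + ((∑ i ∈ Finset.range n, i : ℕ) : R) * h + h ^ 2 * c := by
  induction n with
  | zero => exact ⟨0, by simp⟩
  | succ n ih =>
    obtain ⟨c, hc⟩ := ih
    obtain ⟨d, hd⟩ := aux_pow_one_add h n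
    refine ⟨c + d, ?_⟩
    rw [Finset.sum_range_succ, hc, hd, Finset.sum_range_succ]
    push_cast
    ring

/-- Iterate formula for an affine map. -/
lemma aux_iter (α β : R) (n : ℕ) (x : R) :
    (fun x => α * x + β)^[n] x = α ^ n * x + (∑ i ∈ Finset.range n, α ^ i) * β := by
  induction n with
  | zero => simp
  | succ n ih =>
    rw [Function.iterate_succ_apply', ih, geom_sum_succ]
    ring

lemma aux_nil_mul (a b : R) (hb : IsNilpotent b) : IsNilpotent (a * b) := by
  obtain ⟨n, hn⟩ := hb
  exact ⟨n, by rw [mul_pow, hn, mul_zero]⟩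

lemma aux_unit_cancel {a b : R} (ha : IsUnit a) (e : a * b = 0) : b = 0 := by
  obtain ⟨u, rfl⟩ := ha
  calc b = ↑u⁻¹ * (↑u * b) := by rw [← mul_assoc, Units.inv_mul, one_mul]
  _ = 0 := by rw [e, mul_zero]

end Aux

/-- Every nonzero element of `ZMod (p^v)` is `p^k` times a unit, with `k < v`. -/
lemma aux_factor (p : ℕ) (hp : Nat.Prime p) (v : ℕ)
    (x : ZMod (p ^ v)) (hx : x ≠ 0) :
    ∃ k : ℕ, k < v ∧ ∃ u : ZMod (p ^ v), IsUnit u ∧ x = (p : ZMod (p ^ v)) ^ k * u := by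
  haveI : NeZero (p ^ v) := ⟨pow_ne_zero _ hp.pos.ne'⟩
  set n := x.val with hn
  have hn0 : n ≠ 0 := by simpa [hn, ZMod.val_eq_zero] using hx
  set k := padicValNat p n with hk
  have hdvd : p ^ k ∣ n := pow_padicValNat_dvd
  obtain ⟨m, hm⟩ := hdvd
  haveI : Fact (Nat.Prime p) := ⟨hp⟩
  have hpm : ¬ p ∣ m := by
    rintro ⟨t, ht⟩
    have : p ^ (k + 1) ∣ n := ⟨t, by rw [hm, ht]; ring⟩
    exact pow_succ_padicValNat_not_dvd hn0 this
  have hklt : k < v := by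
    by_contra hkv
    push_neg at hkv
    have h1 : p ^ v ∣ n := dvd_trans (pow_dvd_pow p hkv) ⟨m, hm⟩
    have h2 : n < p ^ v := ZMod.val_lt x
    exact absurd (Nat.le_of_dvd (Nat.pos_of_ne_zero hn0) h1) (by omega)
  refine ⟨k, hklt, (m : ZMod (p ^ v)), ?_, ?_⟩
  · rw [ZMod.isUnit_iff_coprime]
    exact (Nat.coprime_comm.mp (hp.coprime_iff_not_dvd.mpr hpm)).pow_right v
  · have : x = ((n : ℕ) : ZMod (p ^ v)) := by
      simp [hn, ZMod.natCast_val, ZMod.cast_id]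
    rw [this, hm]
    push_cast
    ring

/-- A fixed-point-free affine map of order dividing `p` (odd prime)
on `ℤ/p^vℤ` is translation by `i·p^(v-1)` for some `0 < i < p`. -/
theorem fixed_point_free_p_torsion_affine_hol
    (p : ℕ) (hp : Nat.Prime p) (hodd : Odd p) (v : ℕ) (hv : 1 ≤ v)
    (α β : ZMod (p ^ v)) (hα : IsUnit α)
    (hord : ∀ x : ZMod (p ^ v), (fun x => α * x + β)^[p] x = x)
    (hfpf : ∀ x : ZMod (p ^ v), α * x + β ≠ x) :
    α = 1 ∧ ∃ i : ℕ, 0 < i ∧ i < p ∧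
      β = ((i * p ^ (v - 1) : ℕ) : ZMod (p ^ v)) := by
  haveI : NeZero (p ^ v) := ⟨pow_ne_zero _ hp.pos.ne'⟩
  set S : ZMod (p ^ v) := ∑ i ∈ Finset.range p, α ^ i with hSdef
  -- basic consequences of hord
  have h0 := hord 0
  rw [aux_iter] at h0
  simp only [mul_zero, zero_add] at h0
  have h1 := hord 1
  rw [aux_iter] at h1
  simp only [mul_one] at h1
  rw [← hSdef] at h0 h1
  have hαp : α ^ p = 1 := by rw [h0, add_zero] at h1; exact h1
  -- p^v = 0
  have hpv0 : (p : ZMod (p ^ v)) ^ v = 0 := by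
    have : ((p ^ v : ℕ) : ZMod (p ^ v)) = 0 := ZMod.natCast_self _
    push_cast at this
    exact this
  -- β ≠ 0
  have hβ0 : β ≠ 0 := by
    intro hb
    exact hfpf 0 (by rw [hb, mul_zero, add_zero])
  -- from p * β = 0 extract the conclusion about β
  have key : (p : ZMod (p ^ v)) * β = 0 → ∃ i : ℕ, 0 < i ∧ i < p ∧
      β = ((i * p ^ (v - 1) : ℕ) : ZMod (p ^ v)) := by
    intro hpβ
    have hval : β = ((β.val : ℕ) : ZMod (p ^ v)) := by
      simp [ZMod.natCast_val, ZMod.cast_id]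
    have hcast : ((p * β.val : ℕ) : ZMod (p ^ v)) = 0 := by
      push_cast; rw [← hval]; exact hpβ
    have hdvd : p ^ v ∣ p * β.val := (ZMod.natCast_eq_zero_iff _ _).mp hcast
    have hdvd' : p ^ (v - 1) ∣ β.val := by
      obtain ⟨t, ht⟩ := hdvd
      refine ⟨t, ?_⟩
      have hsplit : p ^ v = p * p ^ (v - 1) := by
        conv_lhs => rw [show v = 1 + (v - 1) by omega]
        rw [pow_add, pow_one]
      have hmul : p * β.val = p * (p ^ (v - 1) * t) := by
        rw [ht, hsplit]; ring
      exact Nat.eq_of_mul_eq_mul_left hp.pos hmul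
    obtain ⟨i, hi⟩ := hdvd'
    have hvlt : β.val < p ^ v := ZMod.val_lt β
    have hilt : i < p := by
      by_contra hip
      push_neg at hip
      have : p ^ v ≤ β.val := by
        calc p ^ v = p ^ (v - 1) * p := by
              conv_lhs => rw [show v = (v - 1) + 1 by omega]
              rw [pow_succ]
        _ ≤ p ^ (v - 1) * i := Nat.mul_le_mul_left _ hip
        _ = β.val := hi.symm
      omega
    have hipos : 0 < i := by
      rcases Nat.eq_zero_or_pos i with h' | h'
      · exfalso
        apply hβ0
        rw [hval, hi, h', mul_zero, Nat.cast_zero]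
      · exact h'
    exact ⟨i, hipos, hilt, by rw [hval, hi, mul_comm]⟩
  -- decomposition of S
  set h : ZMod (p ^ v) := α - 1 with hh
  have hα1 : α = 1 + h := by rw [hh]; ring
  have hhS : h * S = 0 := by
    have := geom_sum_mul α p
    rw [hαp, sub_self, ← hSdef] at this
    rw [mul_comm, hh]
    exact this
  have hgauss : (∑ i ∈ Finset.range p, i : ℕ) = p * ((p - 1) / 2) := by
    rw [Finset.sum_range_id]
    obtain ⟨t, ht⟩ := hodd
    rw [Nat.mul_div_assoc]
    omega
  set w : ZMod (p ^ v) := 1 + ((p - 1) / 2 : ℕ) * h with hwdef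
  obtain ⟨c, hcw⟩ : ∃ c : ZMod (p ^ v), S = (p : ZMod (p ^ v)) * w + h ^ 2 * c := by
    obtain ⟨c, hc⟩ := aux_geom_sum h p
    refine ⟨c, ?_⟩
    rw [hSdef]
    conv_lhs => rw [hα1]
    rw [hc, hgauss, hwdef]
    push_cast
    ring
  -- h is not a unit
  have hhnu : ¬ IsUnit h := by
    rintro ⟨u, hu⟩
    apply hfpf (-(↑u⁻¹ * β))
    have huinv : h * ↑u⁻¹ = 1 := by rw [← hu]; exact u.mul_inv
    have hsub : α * (-(↑u⁻¹ * β)) + β - (-(↑u⁻¹ * β)) = 0 := by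
      calc α * (-(↑u⁻¹ * β)) + β - (-(↑u⁻¹ * β))
          = -(h * ↑u⁻¹) * β + β := by rw [hα1]; ring
      _ = 0 := by rw [huinv]; ring
    exact sub_eq_zero.mp hsub
  -- main claim: h = 0
  have hh0 : h = 0 := by
    by_contra hne
    obtain ⟨k, hklt, u, hu, hfac⟩ := aux_factor p hp v h hne
    have hk1 : 1 ≤ k := by
      rcases Nat.eq_zero_or_pos k with h0' | h0'
      · exact absurd (by rw [hfac, h0', pow_zero, one_mul]; exact hu) hhnu
      · exact h0'
    have hv2 : 2 ≤ v := by omega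
    have hpj : ∀ j : ℕ, v ≤ j → (p : ZMod (p ^ v)) ^ j = 0 := by
      intro j hj
      rw [show j = v + (j - v) by omega, pow_add, hpv0, zero_mul]
    have hhnil : IsNilpotent h := by
      refine ⟨v, ?_⟩
      rw [hfac, mul_pow, ← pow_mul, hpj (k * v) (Nat.le_mul_of_pos_left v hk1), zero_mul]
    have hwu : IsUnit w := by
      have hn : IsNilpotent (-(((p - 1) / 2 : ℕ) * h)) := (aux_nil_mul _ _ hhnil).neg
      have := hn.isUnit_one_sub
      rw [sub_neg_eq_add] at this
      rw [hwdef]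
      exact this
    -- from h * S = 0 derive the key power identity
    have h5 : (p : ZMod (p ^ v)) ^ k * u *
        ((p : ZMod (p ^ v)) * w + ((p : ZMod (p ^ v)) ^ k * u) ^ 2 * c) = 0 := by
      rw [← hfac, ← hcw]
      exact hhS
    have e2 : (p : ZMod (p ^ v)) ^ (k + 1) * (u * w)
        = -((p : ZMod (p ^ v)) ^ (3 * k) * (u ^ 3 * c)) := by
      rw [show 3 * k = k + k + k by ring, pow_add, pow_add, pow_succ]
      linear_combination h5
    obtain ⟨z, hz⟩ := hu.mul hwu
    set s : ZMod (p ^ v) := -(↑z⁻¹ * (u ^ 3 * c)) with hsdef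
    have e4 : (p : ZMod (p ^ v)) ^ (k + 1) = (p : ZMod (p ^ v)) ^ (3 * k) * s := by
      calc (p : ZMod (p ^ v)) ^ (k + 1)
          = ↑z⁻¹ * ((p : ZMod (p ^ v)) ^ (k + 1) * ↑z) := by
            rw [mul_comm ((p : ZMod (p ^ v)) ^ (k + 1)), ← mul_assoc, Units.inv_mul, one_mul]
      _ = ↑z⁻¹ * ((p : ZMod (p ^ v)) ^ (k + 1) * (u * w)) := by rw [hz]
      _ = (p : ZMod (p ^ v)) ^ (3 * k) * s := by rw [e2, hsdef]; ring
    have e5 : (p : ZMod (p ^ v)) ^ (k + 1) * (1 - (p : ZMod (p ^ v)) ^ (2 * k - 1) * s) = 0 := by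
      have hsplit : (p : ZMod (p ^ v)) ^ (3 * k)
          = (p : ZMod (p ^ v)) ^ (k + 1) * (p : ZMod (p ^ v)) ^ (2 * k - 1) := by
        rw [← pow_add]; congr 1; omega
      rw [mul_sub, mul_one, ← mul_assoc, ← hsplit, ← e4, sub_self]
    have hbu : IsUnit (1 - (p : ZMod (p ^ v)) ^ (2 * k - 1) * s) := by
      refine IsNilpotent.isUnit_one_sub ?_
      have hpk : IsNilpotent ((p : ZMod (p ^ v)) ^ (2 * k - 1)) := by
        refine ⟨v, ?_⟩
        rw [← pow_mul]
        exact hpj _ (Nat.le_mul_of_pos_left v (by omega))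
      have := aux_nil_mul s _ hpk
      rwa [mul_comm] at this
    have e6 : (p : ZMod (p ^ v)) ^ (k + 1) = 0 := by
      apply aux_unit_cancel hbu
      rw [mul_comm]
      exact e5
    have hkv : k = v - 1 := by
      have hc0 : ((p ^ (k + 1) : ℕ) : ZMod (p ^ v)) = 0 := by push_cast; exact e6
      have hdv : p ^ v ∣ p ^ (k + 1) := (ZMod.natCast_eq_zero_iff _ _).mp hc0
      have := (Nat.pow_dvd_pow_iff_le_right hp.one_lt).mp hdv
      omega
    have hh2 : h ^ 2 = 0 := by
      rw [hfac, mul_pow, ← pow_mul, hpj (k * 2) (by omega), zero_mul]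
    have hpβ : (p : ZMod (p ^ v)) * β = 0 := by
      apply aux_unit_cancel hwu
      have hSb : S * β = 0 := h0
      rw [hcw, hh2, zero_mul, add_zero] at hSb
      calc w * ((p : ZMod (p ^ v)) * β) = (p : ZMod (p ^ v)) * w * β := by ring
      _ = 0 := hSb
    obtain ⟨i, hipos, hilt, hβeq⟩ := key hpβ
    have hβeq' : β = (p : ZMod (p ^ v)) ^ (v - 1) * (i : ZMod (p ^ v)) := by
      rw [hβeq]; push_cast; ring
    obtain ⟨uu, huu⟩ := hu
    apply hfpf (-(↑uu⁻¹ * (i : ZMod (p ^ v))))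
    have huinv : (↑uu : ZMod (p ^ v)) * ↑uu⁻¹ = 1 := uu.mul_inv
    have hsub : α * (-(↑uu⁻¹ * (i : ZMod (p ^ v)))) + β - (-(↑uu⁻¹ * (i : ZMod (p ^ v)))) = 0 := by
      calc α * (-(↑uu⁻¹ * (i : ZMod (p ^ v)))) + β - (-(↑uu⁻¹ * (i : ZMod (p ^ v))))
          = h * (-(↑uu⁻¹ * (i : ZMod (p ^ v)))) + β := by rw [hα1]; ring
      _ = -((p : ZMod (p ^ v)) ^ (v - 1) * (↑uu * ↑uu⁻¹) * (i : ZMod (p ^ v))) + β := by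
            rw [hfac, hkv, ← huu]; ring
      _ = 0 := by rw [huinv, mul_one, ← hβeq']; ring
    exact sub_eq_zero.mp hsub
  -- now α = 1
  have hαone : α = 1 := by
    have := hh0
    rw [hh, sub_eq_zero] at this
    exact this
  refine ⟨hαone, ?_⟩
  apply key
  have hSp : S = (p : ZMod (p ^ v)) := by
    rw [hSdef, hαone]
    simp
  have hSb : S * β = 0 := h0
  rw [hSp] at hSb
  exact hSb
end

section
/- Let v ≥ 1 and let g(x) = αx + β be an affine bijection of ℤ/2^vℤ (α a unit) with g^2 = id and g(x) ≠ x for all x. Then either g(x) = x + 2^{v-1} for all x, or there is an odd β ∈ ℤ/2^vℤ with g(x) = β - x for all x. -/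
private lemma aux_pow_split (v : ℕ) (hv : 1 ≤ v) : (2:ℕ)^v = 2 * 2^(v-1) := by
  calc (2:ℕ)^v = 2^(v-1+1) := by rw [Nat.sub_add_cancel hv]
  _ = 2 * 2^(v-1) := by rw [pow_succ]; ring

private lemma aux_odd_unit (v n : ℕ) (hn : Odd n) : IsUnit ((n : ZMod (2^v))) := by
  rw [ZMod.isUnit_iff_coprime]
  exact Nat.Coprime.pow_right _ (Nat.coprime_two_right.mpr hn)

private lemma aux_two_mul_eq_zero (v : ℕ) (hv : 1 ≤ v) (x : ZMod (2^v)) (h : 2*x = 0) :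
    x = 0 ∨ x = 2^(v-1) := by
  haveI : NeZero ((2:ℕ)^v) := ⟨by positivity⟩
  have hlt := ZMod.val_lt x
  have hxval : ((x.val : ℕ) : ZMod (2^v)) = x := by rw [ZMod.natCast_val, ZMod.cast_id]
  have h2 : ((2 * x.val : ℕ) : ZMod (2^v)) = 0 := by push_cast [hxval]; exact h
  rw [ZMod.natCast_eq_zero_iff] at h2
  have h2' : 2*2^(v-1) ∣ 2*x.val := by rw [← aux_pow_split v hv]; exact h2
  have hd : 2^(v-1) ∣ x.val := (mul_dvd_mul_iff_left (two_ne_zero)).mp h2'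
  rcases hd with ⟨c, hc⟩
  have hp : 0 < (2:ℕ)^(v-1) := by positivity
  have hlt2 : x.val < 2 * 2^(v-1) := by rw [← aux_pow_split v hv]; exact hlt
  have hc2 : c < 2 := by nlinarith
  interval_cases c
  · left
    rw [← hxval, hc]; simp
  · right
    rw [← hxval, hc]; push_cast; ring

/-- A fixed-point-free affine involution on `ℤ/2^vℤ` is either
translation by `2^(v-1)`, or `x ↦ β - x` for some odd `β`. -/
theorem fixed_point_free_affine_involution_two
    (v : ℕ) (hv : 1 ≤ v)
    (α β : ZMod (2 ^ v)) (hα : IsUnit α)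
    (hinv : ∀ x : ZMod (2 ^ v), α * (α * x + β) + β = x)
    (hfpf : ∀ x : ZMod (2 ^ v), α * x + β ≠ x) :
    (∀ x : ZMod (2 ^ v), α * x + β = x + 2 ^ (v - 1)) ∨
    (∃ b : ZMod (2 ^ v), Odd b.val ∧ ∀ x : ZMod (2 ^ v), α * x + β = b - x) := by
  haveI : NeZero ((2:ℕ)^v) := ⟨by positivity⟩
  have hβ0 : α * β + β = 0 := by linear_combination hinv 0
  have hα2 : α * α = 1 := by linear_combination hinv 1 - hinv 0
  have hαcast : ((α.val : ℕ) : ZMod (2^v)) = α := by rw [ZMod.natCast_val, ZMod.cast_id]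
  have hβcast : ((β.val : ℕ) : ZMod (2^v)) = β := by rw [ZMod.natCast_val, ZMod.cast_id]
  have hβne : β ≠ 0 := by simpa using hfpf 0
  -- α has odd value
  have hαodd : Odd α.val := by
    have hu : IsUnit ((α.val : ℕ) : ZMod (2^v)) := by rwa [hαcast]
    have hcop := (ZMod.isUnit_iff_coprime α.val (2^v)).mp hu
    exact Nat.coprime_two_right.mp
      (Nat.Coprime.coprime_dvd_right (dvd_pow_self 2 (by omega)) hcop)
  obtain ⟨k, hk⟩ := hαodd
  rcases Nat.even_or_odd k with ⟨m, hm⟩ | ⟨m, hm⟩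
  · -- α ≡ 1 (mod 4) : translation case
    set u : ZMod (2^v) := ((2*m+1 : ℕ) : ZMod (2^v)) with hu_def
    have hu : IsUnit u := aux_odd_unit v _ ⟨m, by ring⟩
    obtain ⟨t, ht⟩ := hu.exists_right_inv
    have hαu : α = 2*u - 1 := by
      rw [← hαcast, hk, hm, hu_def]; push_cast; ring
    have h2uβ : 2*(u*β) = 0 := by
      rw [hαu] at hβ0; linear_combination hβ0
    have h2β : 2*β = 0 := by linear_combination t*h2uβ - (2*β)*ht
    have h3 : (α-1)*(2*u) = 0 := by linear_combination hα2 - (α-1)*hαu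
    have h2α1 : 2*(α-1) = 0 := by linear_combination t*h3 - (2*α-2)*ht
    rcases aux_two_mul_eq_zero v hv β h2β with hβ | hβ
    · exact absurd hβ hβne
    rcases aux_two_mul_eq_zero v hv (α-1) h2α1 with hα1 | hα1
    · left
      intro x
      have hA : α = 1 := by linear_combination hα1
      rw [hA, hβ]; ring
    · -- α = 1 + 2^(v-1) : contradicts fixed-point-freeness at x = 1
      have h2p : (2:ZMod (2^v))*2^(v-1) = 0 := by
        have h : ((2*2^(v-1) : ℕ) : ZMod (2^v)) = 0 := by
          rw [← aux_pow_split v hv]; exact ZMod.natCast_self _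
        push_cast at h; linear_combination h
      have hA : α = 1 + 2^(v-1) := by linear_combination hα1
      exact absurd (show α * 1 + β = 1 by rw [hA, hβ]; linear_combination h2p) (hfpf 1)
  · -- α ≡ 3 (mod 4) : reflection case
    set u : ZMod (2^v) := ((2*m+1 : ℕ) : ZMod (2^v)) with hu_def
    have hu : IsUnit u := aux_odd_unit v _ ⟨m, by ring⟩
    obtain ⟨t, ht⟩ := hu.exists_right_inv
    have hαu : α = 2*u + 1 := by
      rw [← hαcast, hk, hm, hu_def]; push_cast; ring
    have hβodd : Odd β.val := by
      by_contra hodd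
      rw [Nat.not_odd_iff_even] at hodd
      obtain ⟨c, hc⟩ := hodd
      have hβc : β = 2*((c : ℕ) : ZMod (2^v)) := by
        rw [← hβcast, hc]; push_cast; ring
      apply hfpf (-(t*((c : ℕ) : ZMod (2^v))))
      rw [hαu, hβc]
      linear_combination (-2*((c : ℕ) : ZMod (2^v)))*ht
    have hβu : IsUnit β := by rw [← hβcast]; exact aux_odd_unit v _ hβodd
    obtain ⟨s, hs⟩ := hβu.exists_right_inv
    have hαm1 : α = -1 := by linear_combination s*hβ0 - (α+1)*hs
    exact Or.inr ⟨β, hβodd, fun x => by rw [hαm1]; ring⟩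
end

section
/- Let B be a (left) brace of abelian type and let z be an element of the center of the multiplicative group B° with z ∘ z = 0. Then the additive cyclic subgroup ⟨z⟩₊ generated by z is closed under the multiplication ∘, hence forms a subbrace of B, and as a brace it is isomorphic to B_k for some k, where B_k is the brace on ℤ/2^kℤ with usual addition and multiplication a ∘ b = a + b - 2ab. -/
/-!
In a brace the maps `λ_a = a ∘ · - a` are additive, so `a ∘ (n • b) = n • λ_a(b) + a`.
For a central `z` with `z ∘ z = 0` this gives `(m • z) ∘ (n • z) = (m + n - 2mn) • z`,
i.e. `m ↦ 1 - 2m` turns `∘` on `⟨z⟩₊` into multiplication of integers modulo the additive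
order `d` of `z`. Every element of `⟨z⟩₊` has finite `∘`-order, so every `1 - 2m` is a unit
modulo `d`; for an odd prime `p ∣ d` the choice `1 - 2m = p` is impossible, so `d = 2 ^ k`.
-/

section Brace

variable {B : Type*} [AddCommGroup B] [Group B]

def braceLambda (hbrace : ∀ a b c : B, a * (b + c) = a * b - a + a * c) (a : B) : B →+ B :=
  AddMonoidHom.mk' (fun b => a * b - a) fun b c => by
    simp only [hbrace]
    abel

theorem brace_mul_zero (hbrace : ∀ a b c : B, a * (b + c) = a * b - a + a * c) (a : B) :
    a * 0 = a :=
  sub_eq_zero.mp (braceLambda hbrace a).map_zero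

theorem brace_one_eq_zero (hbrace : ∀ a b c : B, a * (b + c) = a * b - a + a * c) :
    (1 : B) = 0 :=
  (brace_mul_zero hbrace 1).symm.trans (one_mul 0)

theorem brace_mul_zsmul (hbrace : ∀ a b c : B, a * (b + c) = a * b - a + a * c)
    (a b : B) (n : ℤ) : a * (n • b) = n • (a * b - a) + a :=
  sub_eq_iff_eq_add.mp ((braceLambda hbrace a).map_zsmul n b)

theorem zsmul_mul_zsmul_of_central_of_mul_self_eq_one
    (hbrace : ∀ a b c : B, a * (b + c) = a * b - a + a * c)
    {z : B} (hzc : ∀ g : B, z * g = g * z) (hz2 : z * z = 1) (m n : ℤ) :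
    (m • z) * (n • z) = (m + n - 2 * m * n) • z := by
  have hzz : z * z = 0 := hz2.trans (brace_one_eq_zero hbrace)
  have hmz : (m • z) * z = z - m • z := by
    rw [← hzc, brace_mul_zsmul hbrace, hzz, zero_sub, zsmul_neg]
    abel
  rw [brace_mul_zsmul hbrace, hmz]
  module

end Brace

/-- `m ↦ 1 - 2m` turns `m + n - 2mn` into the product `(1 - 2m)(1 - 2n)`. -/
theorem exists_pow_zsmul_eq_zsmul {B : Type*} [AddGroup B] [Monoid B] {z : B}
    (hone : (1 : B) = 0) (hmul : ∀ m n : ℤ, (m • z) * (n • z) = (m + n - 2 * m * n) • z)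
    (m : ℤ) (j : ℕ) : ∃ c : ℤ, (m • z) ^ j = c • z ∧ 1 - 2 * c = (1 - 2 * m) ^ j := by
  induction j with
  | zero => exact ⟨0, by simpa using hone, by simp⟩
  | succ j ih =>
    obtain ⟨c, hc, hc2⟩ := ih
    exact ⟨c + m - 2 * c * m, by rw [pow_succ, hc, hmul], by rw [pow_succ, ← hc2]; ring⟩

theorem isCoprime_one_sub_two_mul_addOrderOf {B : Type*} [Finite B] [AddGroup B]
    [LeftCancelMonoid B] {z : B} (hone : (1 : B) = 0)
    (hmul : ∀ m n : ℤ, (m • z) * (n • z) = (m + n - 2 * m * n) • z) (m : ℤ) :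
    IsCoprime (1 - 2 * m) (addOrderOf z : ℤ) := by
  obtain ⟨c, hc, hc2⟩ := exists_pow_zsmul_eq_zsmul hone hmul m (orderOf (m • z))
  have hcz : c • z = 0 := by rw [← hc, pow_orderOf_eq_one, hone]
  obtain ⟨e, rfl⟩ := addOrderOf_dvd_iff_zsmul_eq_zero.mpr hcz
  rw [← IsCoprime.pow_left_iff (orderOf_pos (m • z)), ← hc2]
  exact ⟨1, 2 * e, by ring⟩

theorem Nat.exists_eq_two_pow_of_forall_isCoprime_one_sub_two_mul {d : ℕ} (hd : d ≠ 0)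
    (h : ∀ m : ℤ, IsCoprime (1 - 2 * m) (d : ℤ)) : ∃ k : ℕ, d = 2 ^ k := by
  refine ⟨_, Nat.eq_prime_pow_of_unique_prime_dvd hd fun {p} hp hpd => ?_⟩
  by_contra hp2
  obtain ⟨t, rfl⟩ := hp.odd_of_ne_two hp2
  have hunit := (h (-t)).isUnit_of_dvd' (x := ((2 * t + 1 : ℕ) : ℤ)) ⟨1, by push_cast; ring⟩
    (Int.natCast_dvd_natCast.mpr hpd)
  have := hp.one_lt
  rcases Int.isUnit_iff.mp hunit with h1 | h1 <;> push_cast at h1 <;> omega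

theorem AddSubgroup.nonempty_zmultiples_addEquiv_zmod {G : Type*} [AddGroup G] (g : G) :
    Nonempty (zmultiples g ≃+ ZMod (addOrderOf g)) :=
  ⟨(Nat.card_zmultiples g ▸ zmodAddCyclicAddEquiv inferInstance).symm⟩

/-- in a finite brace (of abelian type), a central multiplicative
involution `z` generates an additive subgroup `⟨z⟩₊` that is closed under the brace
multiplication, with `(m•z) ∘ (n•z) = (m+n-2mn)•z`, and `⟨z⟩₊` is (additively, hence
as a brace via this multiplication formula) isomorphic to `B_k = ℤ/2^kℤ` for some `k`. -/
theorem central_involution_generates_Bk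
    (B : Type*) [Finite B] [AddCommGroup B] [Group B]
    (hbrace : ∀ a b c : B, a * (b + c) = a * b - a + a * c)
    (z : B) (hzc : ∀ g : B, z * g = g * z) (hz2 : z * z = 1) :
    (∀ m n : ℤ, (m • z) * (n • z) = (m + n - 2 * m * n) • z) ∧
    ∃ k : ℕ, Nonempty ((AddSubgroup.zmultiples z) ≃+ ZMod (2 ^ k)) := by
  have hmul := zsmul_mul_zsmul_of_central_of_mul_self_eq_one hbrace hzc hz2
  obtain ⟨k, hk⟩ := Nat.exists_eq_two_pow_of_forall_isCoprime_one_sub_two_mul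
    (addOrderOf_pos z).ne' (isCoprime_one_sub_two_mul_addOrderOf (brace_one_eq_zero hbrace) hmul)
  exact ⟨hmul, k, hk ▸ AddSubgroup.nonempty_zmultiples_addEquiv_zmod z⟩
end

section
/- For k ≥ 2, in the brace B_k (underlying set ℤ/2^kℤ, addition the usual one, multiplication a ∘ b = a + b - 2ab): (a) {0,1} and the additive subgroup ⟨2⟩₊ of even elements are subgroups of the multiplicative group (B_k, ∘), and (B_k, ∘) is the internal direct product of {0,1} and ⟨2⟩₊; (b) the set of elements of multiplicative order at most 2 is exactly {0, 1, 2^{k-1}, 2^{k-1}+1}; (c) the multiplicative group of ⟨2⟩₊ is cyclic of order 2^{k-1}. -/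
/-!
The map `a ↦ 1 - 2a` turns `∘` into ring multiplication: `1 - 2(a ∘ b) = (1 - 2a)(1 - 2b)`.
Since `2` is nilpotent in `ℤ/2^kℤ`, every `1 - 2a` is a unit, which yields `∘`-inverses, and no
element is both even and odd, which makes the decomposition `x = e ∘ s` unique.
For (b), `a ∘ a = 2a(1 - a)` and one of `a`, `1 - a` is a unit, so `2a = 0` or `2(1 - a) = 0`.
For (c), `a ↦ 1 - 2a`, read as a map `ℤ/2^kℤ → ℤ/2^(k+1)ℤ`, sends the `n`-th `∘`-power of `2`
to `(-3)^n`; as `-3` has order `2^(k-1)` modulo `2^(k+1)`, the first `2^(k-1)` of these powers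
are distinct even residues, i.e. all of them.
-/

def braceMul {R : Type*} [CommRing R] (a b : R) : R := a + b - 2 * a * b

section

variable {R : Type*} [CommRing R] {a b : R}

@[simp]
lemma braceMul_zero_left (b : R) : braceMul 0 b = b := by simp [braceMul]

@[simp]
lemma braceMul_one_left (b : R) : braceMul 1 b = 1 - b := by unfold braceMul; ring

lemma one_sub_two_mul_braceMul (a b : R) :
    1 - 2 * braceMul a b = (1 - 2 * a) * (1 - 2 * b) := by unfold braceMul; ring

lemma Even.braceMul (ha : Even a) (hb : Even b) : Even (braceMul a b) :=
  (ha.add hb).sub ((even_two.mul_right a).mul_right b)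

lemma Even.isUnit_one_sub (h2 : IsNilpotent (2 : R)) (ha : Even a) : IsUnit (1 - a) := by
  obtain ⟨r, rfl⟩ := ha
  rw [← two_mul]
  exact ((Commute.all _ _).isNilpotent_mul_right h2).isUnit_one_sub

lemma Odd.isUnit (h2 : IsNilpotent (2 : R)) (ha : Odd a) : IsUnit a := by
  obtain ⟨r, rfl⟩ := ha
  simpa [add_comm] using (even_two_mul (-r)).isUnit_one_sub h2

lemma Even.not_odd (h2 : IsNilpotent (2 : R)) [Nontrivial R] (ha : Even a) : ¬Odd a := by
  intro ha'
  simpa using (ha'.sub_even ha).isUnit h2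

lemma exists_even_braceMul_eq_zero (h2 : IsNilpotent (2 : R)) (ha : Even a) :
    ∃ b, Even b ∧ braceMul a b = 0 := by
  obtain ⟨u, hu⟩ := ((even_two_mul a).isUnit_one_sub h2).exists_left_inv
  exact ⟨-(a * u), (ha.mul_right u).neg, by unfold braceMul; linear_combination (-a) * hu⟩

lemma existsUnique_braceMul_even (h2 : IsNilpotent (2 : R)) [Nontrivial R]
    (hpar : ∀ x : R, Even x ∨ Odd x) (x : R) :
    ∃! p : R × R, p.1 ∈ ({0, 1} : Set R) ∧ Even p.2 ∧ x = braceMul p.1 p.2 := by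
  rcases hpar x with hx | hx
  · refine ⟨(0, x), ⟨by simp, hx, by simp⟩, ?_⟩
    rintro ⟨e, s⟩ ⟨rfl | rfl, hs, rfl⟩
    · simp
    · exact absurd (odd_one.sub_even hs) (by simpa using hx.not_odd h2)
  · refine ⟨(1, 1 - x), ⟨by simp, ?_, by simp⟩, ?_⟩
    · exact odd_one.sub_odd hx
    rintro ⟨e, s⟩ ⟨rfl | rfl, hs, rfl⟩
    · exact absurd hx (by simpa using hs.not_odd h2)
    · simp

end

namespace ZMod

lemma isNilpotent_two (k : ℕ) : IsNilpotent (2 : ZMod (2 ^ k)) :=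
  ⟨k, by exact_mod_cast ZMod.natCast_self (2 ^ k)⟩

lemma even_or_odd {n : ℕ} (x : ZMod n) : Even x ∨ Odd x := by
  obtain ⟨i, rfl⟩ := ZMod.intCast_surjective x
  exact (Int.even_or_odd i).imp (·.map (Int.castRingHom _)) (·.map (Int.castRingHom _))

lemma two_mul_eq_zero_iff {k : ℕ} {x : ZMod (2 ^ (k + 1))} :
    2 * x = 0 ↔ x = 0 ∨ x = 2 ^ k := by
  have hself : ((2 ^ (k + 1) : ℕ) : ZMod (2 ^ (k + 1))) = 0 := ZMod.natCast_self _
  push_cast at hself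
  constructor
  · intro h
    rw [← ZMod.natCast_zmod_val x] at h ⊢
    obtain ⟨t, ht⟩ : 2 ^ k ∣ x.val := by
      have h' : ((x.val * 2 : ℕ) : ZMod (2 ^ (k + 1))) = 0 := by
        push_cast; linear_combination h
      rw [ZMod.natCast_eq_zero_iff] at h'
      exact Nat.dvd_of_mul_dvd_mul_right two_pos (by rwa [← pow_succ])
    have ht2 : t < 2 := by
      refine Nat.lt_of_mul_lt_mul_left (a := 2 ^ k) ?_
      rw [← ht, ← pow_succ]
      exact ZMod.val_lt x
    interval_cases t <;> simp [ht]
  · rintro (rfl | rfl)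
    · simp
    · linear_combination hself

lemma mem_zmultiples_two_iff {n : ℕ} {x : ZMod n} :
    x ∈ AddSubgroup.zmultiples 2 ↔ Even x := by
  rw [AddSubgroup.mem_zmultiples_iff]
  constructor
  · rintro ⟨i, rfl⟩
    exact ⟨i, by rw [zsmul_eq_mul]; ring⟩
  · rintro ⟨r, rfl⟩
    obtain ⟨i, rfl⟩ := ZMod.intCast_surjective r
    exact ⟨i, by rw [zsmul_eq_mul]; ring⟩

lemma ncard_setOf_even {k : ℕ} (hk : 1 ≤ k) :
    {x : ZMod (2 ^ k) | Even x}.ncard = 2 ^ (k - 1) := by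
  have h := ZMod.addOrderOf_coe 2 (n := 2 ^ k) (by positivity)
  rw [Nat.gcd_eq_right (dvd_pow_self 2 (by omega)), Nat.cast_ofNat] at h
  rw [← Nat.pow_div hk two_pos, pow_one, ← h, ← Nat.card_zmultiples, ← Nat.card_coe_set_eq]
  congr
  ext x
  exact mem_zmultiples_two_iff.symm

lemma orderOf_neg_three (n : ℕ) : orderOf (-3 : ZMod (2 ^ (n + 2))) = 2 ^ n := by
  have h := ZMod.orderOf_one_add_four_mul (-1) (by decide) n
  norm_num at h
  exact h

def double (k : ℕ) : ZMod (2 ^ k) →+ ZMod (2 ^ (k + 1)) :=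
  ZMod.lift _ ⟨(Int.castAddHom _).comp (AddMonoidHom.mulLeft 2), by
    simpa [pow_succ'] using ZMod.natCast_self (2 ^ (k + 1))⟩

lemma double_intCast (k : ℕ) (i : ℤ) : double k i = 2 * i := by
  simp [double, ZMod.lift_coe]

end ZMod

lemma braceMul_self_eq_zero_iff {k : ℕ} (hk : 1 ≤ k) {a : ZMod (2 ^ k)} :
    braceMul a a = 0 ↔ a = 0 ∨ a = 1 ∨ a = 2 ^ (k - 1) ∨ a = 2 ^ (k - 1) + 1 := by
  obtain ⟨j, rfl⟩ : ∃ j, k = j + 1 := ⟨k - 1, by omega⟩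
  have h2 := ZMod.isNilpotent_two (j + 1)
  have hzero : (2 : ZMod (2 ^ (j + 1))) * 2 ^ j = 0 := ZMod.two_mul_eq_zero_iff.mpr (Or.inr rfl)
  have hfactor : braceMul a a = 2 * a * (1 - a) := by unfold braceMul; ring
  rw [hfactor, Nat.add_sub_cancel]
  constructor
  · intro h
    rcases ZMod.even_or_odd a with ha | ha
    · rcases ZMod.two_mul_eq_zero_iff.mp (((ha.isUnit_one_sub h2).mul_left_eq_zero).mp h)
        with rfl | rfl <;> simp
    · rw [mul_assoc, mul_comm a, ← mul_assoc] at h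
      rcases ZMod.two_mul_eq_zero_iff.mp (((ha.isUnit h2).mul_left_eq_zero).mp h) with h1 | h1
      · simp [sub_eq_zero.mp h1]
      · right; right; right
        linear_combination -h1 - hzero
  · rintro (rfl | rfl | rfl | rfl)
    · simp
    · simp
    · linear_combination (1 - 2 ^ j : ZMod (2 ^ (j + 1))) * hzero
    · linear_combination (-1 - 2 ^ j : ZMod (2 ^ (j + 1))) * hzero

def oneSubDouble (k : ℕ) (a : ZMod (2 ^ k)) : ZMod (2 ^ (k + 1)) := 1 - ZMod.double k a

lemma oneSubDouble_intCast (k : ℕ) (i : ℤ) :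
    oneSubDouble k (i : ZMod (2 ^ k)) = 1 - 2 * (i : ZMod (2 ^ (k + 1))) := by
  rw [oneSubDouble, ZMod.double_intCast]

lemma oneSubDouble_braceMul (k : ℕ) (a b : ZMod (2 ^ k)) :
    oneSubDouble k (braceMul a b) = oneSubDouble k a * oneSubDouble k b := by
  obtain ⟨i, rfl⟩ := ZMod.intCast_surjective a
  obtain ⟨j, rfl⟩ := ZMod.intCast_surjective b
  have : braceMul (i : ZMod (2 ^ k)) j = ((braceMul i j : ℤ) : ZMod (2 ^ k)) := by
    simp [braceMul]
  rw [this, oneSubDouble_intCast, oneSubDouble_intCast, oneSubDouble_intCast]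
  exact_mod_cast congrArg (Int.cast : ℤ → ZMod (2 ^ (k + 1))) (one_sub_two_mul_braceMul i j)

lemma oneSubDouble_iterate_braceMul_two (k n : ℕ) :
    oneSubDouble k ((braceMul 2)^[n] 0) = (-3) ^ n := by
  induction n with
  | zero => simpa using oneSubDouble_intCast k 0
  | succ n ih =>
    rw [Function.iterate_succ_apply', oneSubDouble_braceMul, ih, pow_succ' (-3 : ZMod _)]
    congr 1
    have := oneSubDouble_intCast k 2
    push_cast at this
    rw [this]
    norm_num

lemma injOn_iterate_braceMul_two {k : ℕ} (hk : 1 ≤ k) :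
    (Set.Iio (2 ^ (k - 1))).InjOn fun n => (braceMul (2 : ZMod (2 ^ k)))^[n] 0 := by
  obtain ⟨j, rfl⟩ : ∃ j, k = j + 1 := ⟨k - 1, by omega⟩
  intro n hn m hm h
  rw [Nat.add_sub_cancel, ← ZMod.orderOf_neg_three] at hn hm
  refine pow_injOn_Iio_orderOf hn hm ?_
  simpa only [oneSubDouble_iterate_braceMul_two] using congrArg (oneSubDouble (j + 1)) h

lemma even_iterate_braceMul_two {k : ℕ} (n : ℕ) : Even ((braceMul (2 : ZMod (2 ^ k)))^[n] 0) := by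
  induction n with
  | zero => exact Even.zero
  | succ n ih => rw [Function.iterate_succ_apply']; exact even_two.braceMul ih

lemma exists_iterate_braceMul_two_eq {k : ℕ} (hk : 1 ≤ k) {x : ZMod (2 ^ k)} (hx : Even x) :
    ∃ n, x = (braceMul 2)^[n] 0 := by
  set orbit := (fun n => (braceMul (2 : ZMod (2 ^ k)))^[n] 0) '' Set.Iio (2 ^ (k - 1))
  have horbit : orbit = {x | Even x} := by
    refine Set.eq_of_subset_of_ncard_le ?_ ?_ (Set.toFinite _)
    · rintro _ ⟨n, -, rfl⟩
      exact even_iterate_braceMul_two n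
    · rw [ZMod.ncard_setOf_even hk, (injOn_iterate_braceMul_two hk).ncard_image,
        Set.ncard_Iio_nat]
  obtain ⟨n, -, hn⟩ : x ∈ orbit := horbit ▸ hx
  exact ⟨n, hn.symm⟩

/-- structure of the brace `B_k` on `ℤ/2^kℤ` with `a ∘ b = a + b - 2ab`, `k ≥ 2`:
(a) `{0,1}` and the even elements `⟨2⟩₊` are `∘`-subgroups and `(B_k,∘)` is their internal
direct product; (b) the elements of `∘`-order at most 2 are exactly `{0, 1, 2^(k-1), 2^(k-1)+1}`;
(c) `(⟨2⟩₊, ∘)` is cyclic of order `2^(k-1)`. -/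
theorem structure_of_Bk (k : ℕ) (hk : 2 ≤ k) :
    let m : ZMod (2 ^ k) → ZMod (2 ^ k) → ZMod (2 ^ k) := fun a b => a + b - 2 * a * b
    let S1 : Set (ZMod (2 ^ k)) := {0, 1}
    let S2 : Set (ZMod (2 ^ k)) := {x | ∃ n : ℤ, x = n • (2 : ZMod (2 ^ k))}
    -- (a) both are subgroups of (B_k, ∘) ...
    ((0 : ZMod (2 ^ k)) ∈ S1 ∧ (∀ a ∈ S1, ∀ b ∈ S1, m a b ∈ S1) ∧
      (∀ a ∈ S1, ∃ b ∈ S1, m a b = 0) ∧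
     (0 : ZMod (2 ^ k)) ∈ S2 ∧ (∀ a ∈ S2, ∀ b ∈ S2, m a b ∈ S2) ∧
      (∀ a ∈ S2, ∃ b ∈ S2, m a b = 0) ∧
     -- ... and (B_k,∘) is the internal direct product of S1 and S2
     (∀ x : ZMod (2 ^ k), ∃! p : ZMod (2 ^ k) × ZMod (2 ^ k),
        p.1 ∈ S1 ∧ p.2 ∈ S2 ∧ x = m p.1 p.2)) ∧
    -- (b) elements of multiplicative order ≤ 2
    ({a : ZMod (2 ^ k) | m a a = 0} =
      {0, 1, 2 ^ (k - 1), 2 ^ (k - 1) + 1}) ∧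
    -- (c) (⟨2⟩₊, ∘) is cyclic of order 2^(k-1)
    (∃ g ∈ S2, (∀ x ∈ S2, ∃ n : ℕ, x = (m g)^[n] 0) ∧ S2.ncard = 2 ^ (k - 1)) := by
  intro m S1 S2
  have hm : m = braceMul := rfl
  have h2 := ZMod.isNilpotent_two k
  have : Fact (1 < 2 ^ k) := ⟨Nat.one_lt_two_pow (by omega)⟩
  have hS2 : S2 = {x | Even x} :=
    Set.ext fun x => (exists_congr fun i => eq_comm).trans ZMod.mem_zmultiples_two_iff
  rw [hS2]
  refine ⟨⟨by simp [S1], ?_, ?_, Even.zero, fun a ha b hb => ha.braceMul hb,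
    fun a ha => exists_even_braceMul_eq_zero h2 ha, existsUnique_braceMul_even h2 ZMod.even_or_odd⟩,
    Set.ext fun a => braceMul_self_eq_zero_iff (by omega),
    2, even_two, fun x hx => exists_iterate_braceMul_two_eq (by omega) hx,
    ZMod.ncard_setOf_even (by omega)⟩
  · rintro a (rfl | rfl) b (rfl | rfl) <;> simp [S1, hm]
  · rintro a (rfl | rfl) <;> simp [S1, hm]
end

section
/- Let B be a brace and f ∈ Fix(B). Then λ_f(g) = f ∘ g ∘ f^{-1} for all g ∈ B, where f^{-1} is the inverse in the multiplicative group; consequently λ_f is an automorphism of the brace B (both of (B,+) and of (B,∘)). -/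
/-- for `f ∈ Fix(B)`, `λ_f` is conjugation by `f` and is a brace
automorphism (additive, multiplicative, bijective). -/
theorem fix_of_brace_provides_automorphisms
    (B : Type*) [AddCommGroup B] [Group B]
    (hbrace : ∀ a b c : B, a * (b + c) = a * b - a + a * c)
    (f : B) (hf : ∀ g : B, g * f - g = f) :
    (∀ g : B, f * g - f = f * g * f⁻¹) ∧
    (∀ g h : B, f * (g + h) - f = (f * g - f) + (f * h - f)) ∧
    (∀ g h : B, f * (g * h) - f = (f * g - f) * (f * h - f)) ∧
    Function.Bijective (fun g : B => f * g - f) := by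
  have h1 : ∀ g : B, f * g - f = f * g * f⁻¹ := by
    intro g
    have h := hf (f * g * f⁻¹)
    rw [inv_mul_cancel_right] at h
    have h2 : f * g - f = f * g - (f * g - f * g * f⁻¹) := by rw [h]
    rw [h2]; abel
  refine ⟨h1, fun g h => by rw [hbrace]; abel, fun g h => by rw [h1, h1, h1]; group, ?_⟩
  have : (fun g : B => f * g - f) = fun g => f * g * f⁻¹ := funext h1
  rw [this]
  exact ((Equiv.mulLeft f).trans (Equiv.mulRight f⁻¹)).bijective
end

section
/- Let B be a brace, z ∈ Z(B°) with z ∘ z = 0, and define φ: B → B by φ(g) = g - λ_z(g). Then: (a) φ∘φ = 2φ, so φ(g) = 2g = g + g for all g in the image of φ; (b) λ_z(g) = -g for all g in the image of φ; (c) λ_g(z) = z - 2g for all g in the image of φ; (d) φ(g) = z - λ_g(z) for all g ∈ B. -/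
private lemma aux_shuffle {G : Type*} [AddCommGroup G] {p q r s : G}
    (h : p = q - r + s) : s = p + r - q := by rw [h]; abel

/-- properties of `φ = id - λ_z` for a central multiplicative involution `z`. -/
theorem properties_of_phi_z
    (B : Type*) [AddCommGroup B] [Group B]
    (hbrace : ∀ a b c : B, a * (b + c) = a * b - a + a * c)
    (z : B) (hzc : ∀ g : B, z * g = g * z) (hz2 : z * z = 1) :
    let φ : B → B := fun g => g - (z * g - z)
    -- (a) φ∘φ = 2φ; in particular φ(g) = 2g on the image of φ
    (∀ g : B, φ (φ g) = φ g + φ g) ∧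
    (∀ g ∈ Set.range φ, φ g = g + g) ∧
    -- (b) λ_z(g) = -g on the image of φ
    (∀ g ∈ Set.range φ, z * g - z = -g) ∧
    -- (c) λ_g(z) = z - 2g on the image of φ
    (∀ g ∈ Set.range φ, g * z - g = z - (g + g)) ∧
    -- (d) φ(g) = z - λ_g(z) for all g
    (∀ g : B, φ g = z - (g * z - g)) := by
  intro φ
  -- a * 0 = a
  have h0 : ∀ a : B, a * (0 : B) = a := by
    intro a
    have h := hbrace a 0 0
    rw [add_zero] at h
    simpa using aux_shuffle h
  -- 1 = 0
  have h1 : (1 : B) = 0 := by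
    have := h0 1
    rw [one_mul] at this
    exact this.symm
  -- a * (-b) = a + a - a * b
  have hneg : ∀ a b : B, a * (-b) = a + a - a * b := by
    intro a b
    have h := hbrace a b (-b)
    rw [add_neg_cancel, h0] at h
    exact aux_shuffle h
  -- λ_z is an involution: z * (z*g - z) - z = g
  have hzz : ∀ g : B, z * (z * g - z) - z = g := by
    intro g
    have h := hbrace z (z * g) (-z)
    rw [hneg, ← mul_assoc, hz2, one_mul, h1, ← sub_eq_add_neg] at h
    rw [h]; abel
  -- λ_z of φ g : z * (φ g) - z = (z * g - z) - g
  have hLphi : ∀ g : B, z * (g - (z * g - z)) - z = (z * g - z) - g := by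
    intro g
    have h := hbrace z g (-(z * g - z))
    rw [hneg, ← sub_eq_add_neg] at h
    have hz' := hzz g
    rw [h]
    have : z * (z * g - z) = g + z := sub_eq_iff_eq_add.mp hz'
    rw [this]; abel
  have ha : ∀ g : B, φ (φ g) = φ g + φ g := by
    intro g
    show (g - (z * g - z)) - (z * (g - (z * g - z)) - z) = _
    rw [hLphi g]
    show _ = (g - (z * g - z)) + (g - (z * g - z))
    abel
  have hb : ∀ g ∈ Set.range φ, z * g - z = -g := by
    rintro _ ⟨h, rfl⟩
    show z * (h - (z * h - z)) - z = -(h - (z * h - z))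
    rw [hLphi h]; abel
  refine ⟨ha, ?_, hb, ?_, ?_⟩
  · rintro _ ⟨h, rfl⟩
    exact ha h
  · intro g hg
    have hbg := hb g hg
    rw [sub_eq_iff_eq_add] at hbg
    rw [← hzc, hbg]
    abel
  · intro g
    show g - (z * g - z) = z - (g * z - g)
    rw [← hzc]; abel
end

section
/- Let B be a brace and z ∈ Z(B°), and let φ = id - λ_z (i.e., φ(g) = g - λ_z(g)). If z ≠ 0, then z does not lie in the image of φ. -/
/-- "cabling out the center": for central `z ≠ 0`, `z` is not in the
image of `φ = id - λ_z`. -/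
theorem cabling_out_the_center
    (B : Type*) [AddCommGroup B] [Group B]
    (hbrace : ∀ a b c : B, a * (b + c) = a * b - a + a * c)
    (z : B) (hzc : ∀ g : B, z * g = g * z) (hz : z ≠ 0) :
    ∀ g : B, g - (z * g - z) ≠ z := by
  intro g hg
  -- first: a * 0 = a for all a
  have hzero : ∀ a : B, a * 0 = a := by
    intro a
    have h := hbrace a 0 0
    rw [add_zero] at h
    have h2 : a * 0 + a = a * 0 + (a * 0) := by
      conv_lhs => rw [h]
      abel
    exact (add_left_cancel h2).symm
  have hone : (1 : B) = 0 := by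
    have := hzero (1 : B)
    rw [one_mul] at this
    exact this.symm
  -- from hg: g = z * g
  have h1 : g = z * g := by
    have h : g - z * g + z = 0 + z := by
      rw [zero_add]
      conv_rhs => rw [← hg]
      abel
    exact sub_eq_zero.mp (add_right_cancel h)
  rw [hzc] at h1
  have hz1 : z = 1 := mul_left_cancel (a := g) (by rw [mul_one]; exact h1.symm)
  exact hz (hz1.trans hone)
end

section
/- Let X be a cycle set with permutation brace G(X), and let φ: G(X)⁺ → G(X)⁺ be an additive homomorphism satisfying λ_g(φ(h)) = φ(λ_g(h)) for all g in the image of φ and all h (a relative λ-endomorphism). Define x *_φ y = λ_{φ(λ_x)}^{-1}(y). Then (X, *_φ) is again a cycle set; in particular (x *_φ y) *_φ (x *_φ z) = λ^{-1}_{φ(λ_x)+φ(λ_y)}(z) for all x,y,z, which is symmetric in x and y. -/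
/-- endocabling by a relative λ-endomorphism `φ` of the permutation brace
`G` of a cycle set `(X, op)` yields again a cycle set, with
`(x *_φ y) *_φ (x *_φ z) = λ_{φ(λ_x)+φ(λ_y)}⁻¹(z)`, symmetric in `x` and `y`. -/
theorem endocabling_is_cycle_set
    {X G : Type*} [Finite X] [AddCommGroup G] [Group G]
    (op : X → X → X)
    (hbij : ∀ x : X, Function.Bijective (op x))
    (hcy : ∀ x y z : X, op (op x y) (op x z) = op (op y x) (op y z))
    (hbrace : ∀ a b c : G, a * (b + c) = a * b - a + a * c)
    (act : G →* Equiv.Perm X) (hinj : Function.Injective act)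
    (lam : X → G)
    (hlam : ∀ x y : X, act (lam x) (op x y) = y)
    (hfund : ∀ (g : G) (x : X), lam (act g x) = g * lam x - g)
    (hgen : AddSubgroup.closure (Set.range lam) = ⊤)
    (φ : G →+ G)
    (hφ : ∀ g ∈ Set.range φ, ∀ h : G, g * φ h - g = φ (g * h - g)) :
    let opφ : X → X → X := fun x y => (act (φ (lam x)))⁻¹ y
    (∀ x : X, Function.Bijective (opφ x)) ∧
    (∀ x y z : X,
      opφ (opφ x y) (opφ x z) = (act (φ (lam x) + φ (lam y)))⁻¹ z ∧
      opφ (opφ x y) (opφ x z) = opφ (opφ y x) (opφ y z)) := by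
  intro opφ
  have hmain : ∀ x y z : X,
      opφ (opφ x y) (opφ x z) = (act (φ (lam x) + φ (lam y)))⁻¹ z := by
    intro x y z
    -- 1 = 0 in the brace
    have h10 : (1 : G) = 0 := by
      have h := hfund 1 x
      rw [map_one] at h
      simp only [Equiv.Perm.coe_one, id_eq, one_mul] at h
      have := sub_eq_self.mp h.symm
      exact this
    -- key identity: g * (g⁻¹ * h - g⁻¹) = h + g
    have key : ∀ g h : G, g * (g⁻¹ * h - g⁻¹) = h + g := by
      intro g h
      have e2 := hbrace g g⁻¹ (-g⁻¹)
      rw [add_neg_cancel, ← h10, mul_one, mul_inv_cancel, h10] at e2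
      -- e2 : g = 0 - g + g * -g⁻¹
      have hg : g * (-g⁻¹) = g + g := by
        have h3 : g + g = 0 - g + g * -g⁻¹ + g := by nth_rewrite 1 [e2]; rfl
        rw [h3]; abel
      have e1 := hbrace g (g⁻¹ * h) (-g⁻¹)
      rw [mul_inv_cancel_left, hg] at e1
      rw [sub_eq_add_neg, e1]; abel
    -- φ commutes with conjugation-type map for g⁻¹, g ∈ range φ
    have hginv : ∀ g ∈ Set.range φ, ∀ h : G,
        φ (g⁻¹ * h - g⁻¹) = g⁻¹ * φ h - g⁻¹ := by
      intro g hg h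
      have h1 := hφ g hg (g⁻¹ * h - g⁻¹)
      have h2 : g * (g⁻¹ * h - g⁻¹) - g = h := by rw [key]; abel
      rw [h2] at h1
      -- h1 : g * φ (g⁻¹ * h - g⁻¹) - g = φ h
      have h3 : g * φ (g⁻¹ * h - g⁻¹) = g * (g⁻¹ * φ h - g⁻¹) := by
        rw [key]
        have := sub_eq_iff_eq_add.mp h1
        rw [this]
      exact mul_left_cancel h3
    set a := φ (lam x) with ha
    set b := φ (lam y) with hb
    have hl : φ (lam (opφ x y)) = a⁻¹ * b - a⁻¹ := by
      show φ (lam ((act a)⁻¹ y)) = _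
      rw [← map_inv, hfund, map_sub]
      have := hginv a ⟨lam x, rfl⟩ (lam y)
      rw [map_sub] at this
      exact this
    show (act (φ (lam (opφ x y))))⁻¹ ((act a)⁻¹ z) = _
    rw [hl]
    have : act a * act (a⁻¹ * b - a⁻¹) = act (a + b) := by
      rw [← map_mul]
      congr 1
      rw [key a b, add_comm]
    rw [← this, mul_inv_rev, Equiv.Perm.mul_apply]
  refine ⟨fun x => (act (φ (lam x)))⁻¹.bijective, fun x y z => ⟨hmain x y z, ?_⟩⟩
  rw [hmain x y z, hmain y x z, add_comm]
end

section
/- Let X be a cycle set and φ, ψ λ-endomorphisms of G(X). Denote by T_φ the diagonal of the φ-cabled cycle set, T_φ(x) = λ_{φ(λ_x)}^{-1}(x). Then T_{φ+ψ} = T_φ ∘ T_ψ = T_ψ ∘ T_φ as permutations of X. In particular, with φ = k·id, one recovers T_{k·id} = T^k for all k ≥ 0. -/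
/-!
Write `a = λ_x` and `g = ψ(a)`. By the fundamental relation, `T_ψ(x) = λ_g⁻¹(x)` has
`λ_{T_ψ(x)} = g⁻¹ a - g⁻¹`, and since `φ` commutes with the λ-map of `g⁻¹` its image under `φ` is
`g⁻¹ φ(a) - g⁻¹ = g⁻¹ (φ(a) + g)` by the brace identity. Hence the two inverse actions in
`T_φ(T_ψ(x))` combine into the single action of `(φ(a) + ψ(a))⁻¹`, which is `T_{φ+ψ}(x)`.
Commutativity of `+` gives the other order, and iterating from `T_id = T` gives `T_{k·id} = T^k`.
-/

section Cabling

variable {X G : Type*} [AddCommGroup G] [Group G]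

variable (G) in
def IsLeftBrace : Prop :=
  ∀ a b c : G, a * (b + c) = a * b - a + a * c

def IsLambdaEndo (φ : G →+ G) : Prop :=
  ∀ g h : G, g * φ h - g = φ (g * h - g)

/-- `T_φ(x) = λ_{φ(λ_x)}⁻¹(x)`, with `act` the λ-action of `G(X)` on `X` and `lam x = λ_x`. -/
def cablingDiagonal (act : G →* Equiv.Perm X) (lam : X → G) (φ : G →+ G) (x : X) : X :=
  (act (φ (lam x)))⁻¹ x

theorem IsLeftBrace.one_eq_zero (hG : IsLeftBrace G) : (1 : G) = 0 := by
  have h := hG 1 0 0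
  simp only [add_zero, one_mul, zero_sub] at h
  exact neg_eq_zero.mp h.symm

theorem IsLeftBrace.inv_mul_sub_inv (hG : IsLeftBrace G) (g h : G) :
    g⁻¹ * h - g⁻¹ = g⁻¹ * (h + g) := by
  rw [hG, inv_mul_cancel, hG.one_eq_zero, add_zero]

theorem lam_perm_inv_apply {act : G →* Equiv.Perm X} {lam : X → G}
    (hfund : ∀ (g : G) (x : X), lam (act g x) = g * lam x - g) (g : G) (x : X) :
    lam ((act g)⁻¹ x) = g⁻¹ * lam x - g⁻¹ := by
  rw [← map_inv, hfund]

theorem cablingDiagonal_add (hG : IsLeftBrace G) {act : G →* Equiv.Perm X} {lam : X → G}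
    (hfund : ∀ (g : G) (x : X), lam (act g x) = g * lam x - g)
    {φ : G →+ G} (hφ : IsLambdaEndo φ) (ψ : G →+ G) (x : X) :
    cablingDiagonal act lam (φ + ψ) x =
      cablingDiagonal act lam φ (cablingDiagonal act lam ψ x) := by
  have hφ_lam : φ (lam ((act (ψ (lam x)))⁻¹ x)) = (ψ (lam x))⁻¹ * (φ (lam x) + ψ (lam x)) := by
    rw [lam_perm_inv_apply hfund, ← hφ, hG.inv_mul_sub_inv]
  rw [cablingDiagonal, cablingDiagonal, cablingDiagonal, AddMonoidHom.add_apply, hφ_lam,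
    ← Equiv.Perm.mul_apply]
  simp only [← map_inv act, ← map_mul act]
  congr 2
  group

theorem cablingDiagonal_zero (hG : IsLeftBrace G) (act : G →* Equiv.Perm X) (lam : X → G) :
    cablingDiagonal act lam 0 = id := by
  funext x
  simp [cablingDiagonal, ← hG.one_eq_zero]

theorem cablingDiagonal_nsmul (hG : IsLeftBrace G) {act : G →* Equiv.Perm X} {lam : X → G}
    (hfund : ∀ (g : G) (x : X), lam (act g x) = g * lam x - g)
    {φ : G →+ G} (hφ : IsLambdaEndo φ) (n : ℕ) :
    cablingDiagonal act lam (n • φ) = (cablingDiagonal act lam φ)^[n] := by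
  induction n with
  | zero => rw [zero_smul, cablingDiagonal_zero hG, Function.iterate_zero]
  | succ n ih =>
    funext x
    rw [succ_nsmul', cablingDiagonal_add hG hfund hφ, ih, Function.iterate_succ_apply']

theorem cablingDiagonal_id {op : X → X → X} {act : G →* Equiv.Perm X} {lam : X → G}
    (hlam : ∀ x y : X, act (lam x) (op x y) = y) (x : X) :
    cablingDiagonal act lam (AddMonoidHom.id G) x = op x x :=
  (Equiv.Perm.eq_inv_iff_eq.mpr (hlam x x)).symm

end Cabling

theorem diagonals_of_endocablings_are_homomorphisms_general
    {X G : Type*} [AddCommGroup G] [Group G]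
    (op : X → X → X)
    (hbrace : ∀ a b c : G, a * (b + c) = a * b - a + a * c)
    (act : G →* Equiv.Perm X)
    (lam : X → G)
    (hlam : ∀ x y : X, act (lam x) (op x y) = y)
    (hfund : ∀ (g : G) (x : X), lam (act g x) = g * lam x - g)
    (φ ψ : G →+ G)
    (hφ : ∀ g h : G, g * φ h - g = φ (g * h - g))
    (hψ : ∀ g h : G, g * ψ h - g = ψ (g * h - g)) :
    let Tc : (G →+ G) → X → X := fun χ x => (act (χ (lam x)))⁻¹ x
    (∀ x : X, Tc (φ + ψ) x = Tc φ (Tc ψ x)) ∧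
    (∀ x : X, Tc (φ + ψ) x = Tc ψ (Tc φ x)) ∧
    (∀ (k : ℕ) (x : X), Tc (k • AddMonoidHom.id G) x = (fun a => op a a)^[k] x) := by
  intro Tc
  have hid : IsLambdaEndo (AddMonoidHom.id G) := fun _ _ => rfl
  refine ⟨cablingDiagonal_add hbrace hfund hφ ψ, fun x => ?_, fun k x => ?_⟩
  · rw [add_comm]
    exact cablingDiagonal_add hbrace hfund hψ φ x
  · change cablingDiagonal act lam _ x = _
    rw [cablingDiagonal_nsmul hbrace hfund hid]
    congr 1
    funext a
    exact cablingDiagonal_id hlam a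

/-- diagonals of endocabled cycle sets: `T_{φ+ψ} = T_φ ∘ T_ψ = T_ψ ∘ T_φ`,
and in particular `T_{k·id} = T^k` for all `k ≥ 0`. -/
theorem diagonals_of_endocablings_are_homomorphisms
    {X G : Type*} [Finite X] [AddCommGroup G] [Group G]
    (op : X → X → X)
    (hbij : ∀ x : X, Function.Bijective (op x))
    (hcy : ∀ x y z : X, op (op x y) (op x z) = op (op y x) (op y z))
    (hbrace : ∀ a b c : G, a * (b + c) = a * b - a + a * c)
    (act : G →* Equiv.Perm X) (hinj : Function.Injective act)
    (lam : X → G)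
    (hlam : ∀ x y : X, act (lam x) (op x y) = y)
    (hfund : ∀ (g : G) (x : X), lam (act g x) = g * lam x - g)
    (hgen : AddSubgroup.closure (Set.range lam) = ⊤)
    (φ ψ : G →+ G)
    (hφ : ∀ g h : G, g * φ h - g = φ (g * h - g))
    (hψ : ∀ g h : G, g * ψ h - g = ψ (g * h - g)) :
    let Tc : (G →+ G) → X → X := fun χ x => (act (χ (lam x)))⁻¹ x
    (∀ x : X, Tc (φ + ψ) x = Tc φ (Tc ψ x)) ∧
    (∀ x : X, Tc (φ + ψ) x = Tc ψ (Tc φ x)) ∧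
    (∀ (k : ℕ) (x : X), Tc (k • AddMonoidHom.id G) x = (fun a => op a a)^[k] x) :=
  diagonals_of_endocablings_are_homomorphisms_general op hbrace act lam hlam hfund φ ψ hφ hψ
end

section
/- Let X be a cycle set with diagonal T and let z be a central element of the multiplicative group of G(X). Then the diagonal of the λ_z-cabled cycle set X_{λ_z} equals the conjugate T^{λ_z} = λ_z^{-1} ∘ T ∘ λ_z. Consequently, T commutes with λ_z^{-1} ∘ T ∘ λ_z. -/
/-- for `z` central in the permutation brace, the diagonal of the
`λ_z`-cabled cycle set is the conjugate `T^{λ_z} = λ_z⁻¹ ∘ T ∘ λ_z`, and `T` commutes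
with this conjugate. -/
theorem diagonal_of_cabling_by_center
    {X G : Type*} [Finite X] [AddCommGroup G] [Group G]
    (op : X → X → X)
    (hbij : ∀ x : X, Function.Bijective (op x))
    (hcy : ∀ x y z : X, op (op x y) (op x z) = op (op y x) (op y z))
    (hbrace : ∀ a b c : G, a * (b + c) = a * b - a + a * c)
    (act : G →* Equiv.Perm X) (hinj : Function.Injective act)
    (lam : X → G)
    (hlam : ∀ x y : X, act (lam x) (op x y) = y)
    (hfund : ∀ (g : G) (x : X), lam (act g x) = g * lam x - g)
    (hgen : AddSubgroup.closure (Set.range lam) = ⊤)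
    (z : G) (hz : ∀ g : G, z * g = g * z) :
    let T : X → X := fun x => op x x
    let Tz : X → X := fun x => (act (z * lam x - z))⁻¹ x
    let Tconj : X → X := fun x => (act z)⁻¹ (T (act z x))
    (∀ x : X, Tz x = Tconj x) ∧ (∀ x : X, T (Tconj x) = Tconj (T x)) := by
  intro T Tz Tconj
  -- In a brace the multiplicative identity equals the additive identity.
  have h01 : (1 : G) = 0 := by
    have h := hbrace 1 0 0
    simp only [add_zero, one_mul] at h
    have h' : (-1 : G) = 0 := by
      rw [h]; abel
    exact neg_eq_zero.mp h'
  -- multiplication over subtraction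
  have hms : ∀ a u v : G, a * (u - v) = a * u - a * v + a := by
    intro a u v
    have h := hbrace a (u - v) v
    rw [sub_add_cancel] at h
    rw [h]; abel
  -- op in terms of the action
  have hop : ∀ x y : X, op x y = (act (lam x))⁻¹ y := by
    intro x y
    apply (act (lam x)).injective
    simpa using hlam x y
  -- z⁻¹ g z = g for all g
  have hc : ∀ g : G, z⁻¹ * g * z = g := by
    intro g
    rw [mul_assoc, ← hz g, inv_mul_cancel_left]
  -- key permutation identity
  have hkey : ∀ (g : G) (x : X), (act z)⁻¹ ((act g)⁻¹ (act z x)) = (act g)⁻¹ x := by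
    intro g x
    have e : z⁻¹ * g⁻¹ * z = g⁻¹ := hc g⁻¹
    calc (act z)⁻¹ ((act g)⁻¹ (act z x)) = act (z⁻¹ * g⁻¹ * z) x := by
          simp [map_mul, map_inv, mul_assoc, Equiv.Perm.mul_apply]
      _ = (act g)⁻¹ x := by rw [e, map_inv]
  have part1 : ∀ x : X, Tz x = Tconj x := by
    intro x
    show (act (z * lam x - z))⁻¹ x = (act z)⁻¹ (op (act z x) (act z x))
    rw [hop, hfund, hkey]
  refine ⟨part1, ?_⟩
  intro x
  set a := lam x with ha
  set b := z * a - z with hb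
  have hTx : T x = act a⁻¹ x := by
    show op x x = act a⁻¹ x
    rw [hop, map_inv, ha]
  have hTconjx : Tconj x = act b⁻¹ x := by
    rw [← part1 x]
    show (act (z * lam x - z))⁻¹ x = act b⁻¹ x
    rw [map_inv, ← ha, ← hb]
  have lhs_eq : T (Tconj x) = act ((b⁻¹ * a - b⁻¹)⁻¹ * b⁻¹) x := by
    show op (Tconj x) (Tconj x) = _
    rw [hop, hTconjx, hfund b⁻¹ x, ← ha]
    simp [map_mul, map_inv, Equiv.Perm.mul_apply]
  have rhs_eq : Tconj (T x) = act ((z * (1 - a⁻¹) - z)⁻¹ * a⁻¹) x := by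
    rw [← part1 (T x)]
    show (act (z * lam (T x) - z))⁻¹ (T x) = _
    rw [hTx, hfund a⁻¹ x, ← ha, inv_mul_cancel]
    simp [map_mul, map_inv, Equiv.Perm.mul_apply]
  have key : b * (b⁻¹ * a - b⁻¹) = a * (z * (1 - a⁻¹) - z) := by
    have l1 : b * (b⁻¹ * a - b⁻¹) = a - 1 + b := by
      rw [hms b (b⁻¹ * a) b⁻¹, mul_inv_cancel_left, mul_inv_cancel]
    have l2 : z * (1 - a⁻¹) = z - z * a⁻¹ + z := by
      rw [hms z 1 a⁻¹, mul_one]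
    have l3 : a * (z * (1 - a⁻¹) - z) = z * a - z + a := by
      rw [l2]
      have e : z - z * a⁻¹ + z - z = z - z * a⁻¹ := by abel
      rw [e, hms a z (z * a⁻¹), ← mul_assoc, ← hz a, mul_inv_cancel_right]
    rw [l1, l3, hb, h01]
    abel
  have hg : (b⁻¹ * a - b⁻¹)⁻¹ * b⁻¹ = (z * (1 - a⁻¹) - z)⁻¹ * a⁻¹ := by
    rw [← mul_inv_rev, ← mul_inv_rev, key]
  rw [lhs_eq, rhs_eq, hg]
end

section
/- Let X be a cycle set and f ∈ Fix(G(X)) (an element of the permutation brace fixed by all λ_g). Then λ_f is an automorphism of the cycle set X, i.e., λ_f(x * y) = λ_f(x) * λ_f(y) for all x, y ∈ X, and λ_f commutes with the diagonal T of X. -/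
/-- for `f ∈ Fix(G(X))`, the permutation `λ_f` (the action of `f` on `X`)
is an automorphism of the cycle set `X` and commutes with the diagonal `T`. -/
theorem fix_provides_cycle_set_automorphisms
    {X G : Type*} [Finite X] [AddCommGroup G] [Group G]
    (op : X → X → X)
    (hbij : ∀ x : X, Function.Bijective (op x))
    (hcy : ∀ x y z : X, op (op x y) (op x z) = op (op y x) (op y z))
    (hbrace : ∀ a b c : G, a * (b + c) = a * b - a + a * c)
    (act : G →* Equiv.Perm X) (hinj : Function.Injective act)
    (lam : X → G)
    (hlam : ∀ x y : X, act (lam x) (op x y) = y)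
    (hfund : ∀ (g : G) (x : X), lam (act g x) = g * lam x - g)
    (hgen : AddSubgroup.closure (Set.range lam) = ⊤)
    (f : G) (hf : ∀ g : G, g * f - g = f) :
    (∀ x y : X, act f (op x y) = op (act f x) (act f y)) ∧
    (∀ x : X, act f (op x x) = op (act f x) (act f x)) := by
  have key : ∀ x y : X, act f (op x y) = op (act f x) (act f y) := by
    intro x y
    apply (act (lam (act f x))).injective
    rw [hlam]
    have h1 : lam (act f x) * f = f * lam x := by
      rw [hfund]
      have h2 : (f * lam x - f) * f = f + (f * lam x - f) :=
        sub_eq_iff_eq_add.mp (hf (f * lam x - f))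
      rw [h2]; abel
    calc act (lam (act f x)) (act f (op x y))
        = act (lam (act f x) * f) (op x y) := by simp [map_mul]
      _ = act (f * lam x) (op x y) := by rw [h1]
      _ = act f (act (lam x) (op x y)) := by simp [map_mul]
      _ = act f y := by rw [hlam]
  exact ⟨key, fun x => key x x⟩
end
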